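/- Let 0 < p < 1, q = 1 - p, and let B be the infinite nonnegative matrix on S = {1, 2, 3, ...} with B(x, x+1) = p for all x ≥ 1, B(x, x-1) = q for all x ≥ 2, and all other entries 0. Then for every real λ with λ ≥ 2·√(p·q), and for all x, y ∈ S, the series ∑_{n=0}^{∞} λ^{-n}·B^n(x, y) converges (is finite). -/

import Mathlib

open Real

/-- The birth-death matrix on `S = {1, 2, 3, ...}` (embedded in `ℕ`, with row/column `0`
identically zero). -/
noncomputable def bdB (p : ℝ) : ℕ → ℕ → ℝ := fun x y =>
  if 1 ≤ x ∧ y = x + 1 then p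
  else if 2 ≤ x ∧ y + 1 = x then 1 - p
  else 0

/-- Matrix powers: `B^0 = I`, `B^{n+1}(x,y) = ∑_w B^n(x,w) B(w,y)`. -/
noncomputable def matPow {S : Type*} [DecidableEq S] (B : S → S → ℝ) : ℕ → S → S → ℝ
  | 0 => fun x y => if x = y then (1 : ℝ) else 0
  | n + 1 => fun x y => ∑' w, matPow B n x w * B w y

namespace BDAux

noncomputable def J (n x y : ℕ) : ℝ :=
  ∫ θ in (0:ℝ)..π, Real.cos θ ^ n * (Real.sin (x*θ) * Real.sin (y*θ))

lemma contJ (n x y : ℕ) :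
    IntervalIntegrable (fun θ : ℝ => Real.cos θ ^ n * (Real.sin (x*θ) * Real.sin (y*θ)))
      MeasureTheory.volume 0 π :=
  (Continuous.intervalIntegrable (by fun_prop) 0 π)

lemma int_cos_mul {c : ℝ} (hc : c ≠ 0) :
    (∫ θ in (0:ℝ)..π, Real.cos (c*θ)) = Real.sin (c*π) / c := by
  rw [intervalIntegral.integral_comp_mul_left Real.cos hc]
  simp [integral_cos, smul_eq_mul]
  ring

lemma J_zero (x y : ℕ) (hx : 1 ≤ x) (hy : 1 ≤ y) :
    J 0 x y = if x = y then π/2 else 0 := by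
  have key : ∀ θ ∈ Set.uIcc (0:ℝ) π, Real.cos θ ^ 0 * (Real.sin (x*θ) * Real.sin (y*θ))
      = (Real.cos (((x:ℝ)-y)*θ) - Real.cos (((x:ℝ)+y)*θ)) / 2 := by
    intro θ _
    rw [pow_zero, one_mul, sub_mul, add_mul, Real.cos_sub, Real.cos_add]
    ring
  have hxy : ((x:ℝ)+y) ≠ 0 := by positivity
  have h2 : Real.sin (((x:ℝ)+y)*π) = 0 := by
    have := Real.sin_nat_mul_pi (x+y); push_cast at this; exact this
  unfold J
  rw [intervalIntegral.integral_congr key]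
  have hint1 : IntervalIntegrable (fun θ : ℝ => Real.cos (((x:ℝ)-y)*θ)) MeasureTheory.volume 0 π :=
    (Continuous.intervalIntegrable (by fun_prop) 0 π)
  have hint2 : IntervalIntegrable (fun θ : ℝ => Real.cos (((x:ℝ)+y)*θ)) MeasureTheory.volume 0 π :=
    (Continuous.intervalIntegrable (by fun_prop) 0 π)
  rw [intervalIntegral.integral_div, intervalIntegral.integral_sub hint1 hint2,
    int_cos_mul hxy, h2]
  by_cases h : x = y
  · subst h
    have : ((x:ℝ) - x) = 0 := by ring
    simp [this, zero_mul, Real.cos_zero, if_pos]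
  · have hne : ((x:ℝ)-y) ≠ 0 := sub_ne_zero.mpr (by exact_mod_cast h)
    have h1 : Real.sin (((x:ℝ)-y)*π) = 0 := by
      have := Real.sin_int_mul_pi ((x:ℤ)-y); push_cast at this; exact this
    rw [int_cos_mul hne, h1]
    simp [h]

lemma J_y0 (n x : ℕ) : J n x 0 = 0 := by
  unfold J; simp

lemma J_rec (n x y : ℕ) (hy : 1 ≤ y) : J n x (y-1) + J n x (y+1) = 2 * J (n+1) x y := by
  unfold J
  rw [← intervalIntegral.integral_const_mul,
    ← intervalIntegral.integral_add (contJ n x (y-1)) (contJ n x (y+1))]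
  apply intervalIntegral.integral_congr
  intro θ _
  have hc : ((y-1 : ℕ):ℝ) = (y:ℝ) - 1 := by
    push_cast [hy]; ring
  rw [hc]
  push_cast
  rw [sub_mul, add_mul, one_mul, Real.sin_sub, Real.sin_add, pow_succ]
  ring

lemma bdB_nonneg {p : ℝ} (hp0 : 0 ≤ p) (hp1 : p ≤ 1) (x y : ℕ) : 0 ≤ bdB p x y := by
  unfold bdB; split_ifs <;> linarith

lemma matPow_nonneg {p : ℝ} (hp0 : 0 ≤ p) (hp1 : p ≤ 1) :
    ∀ (n x y : ℕ), 0 ≤ matPow (bdB p) n x y := by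
  intro n
  induction n with
  | zero => intro x y; simp only [matPow]; positivity
  | succ n ih =>
    intro x y
    simp only [matPow]
    exact tsum_nonneg fun w => mul_nonneg (ih x w) (bdB_nonneg hp0 hp1 w y)

lemma bdB_col_zero (p : ℝ) (w : ℕ) : bdB p w 0 = 0 := by
  unfold bdB
  rw [if_neg (by omega), if_neg (by omega)]

lemma matPow_col_zero (p : ℝ) (n x : ℕ) (hx : 1 ≤ x) : matPow (bdB p) n x 0 = 0 := by
  cases n with
  | zero => simp only [matPow]; rw [if_neg (by omega)]
  | succ n => simp only [matPow, bdB_col_zero, mul_zero, tsum_zero]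

lemma matPow_succ (p : ℝ) (n x y : ℕ) (hx : 1 ≤ x) (hy : 1 ≤ y) :
    matPow (bdB p) (n+1) x y
      = p * matPow (bdB p) n x (y-1) + (1-p) * matPow (bdB p) n x (y+1) := by
  have hsupp : ∀ w ∉ ({y-1, y+1} : Finset ℕ), matPow (bdB p) n x w * bdB p w y = 0 := by
    intro w hw
    simp only [Finset.mem_insert, Finset.mem_singleton] at hw
    push_neg at hw
    have : bdB p w y = 0 := by
      unfold bdB
      rw [if_neg (by omega), if_neg (by omega)]
    rw [this, mul_zero]
  have hmem : (y-1 : ℕ) ∉ ({y+1} : Finset ℕ) := by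
    simp only [Finset.mem_singleton]; omega
  show (∑' w, matPow (bdB p) n x w * bdB p w y) = _
  rw [tsum_eq_sum hsupp, Finset.sum_insert hmem, Finset.sum_singleton]
  have hB2 : bdB p (y+1) y = 1 - p := by
    unfold bdB
    rw [if_neg (by omega), if_pos (by omega)]
  by_cases h2 : 2 ≤ y
  · have hB1 : bdB p (y-1) y = p := by
      unfold bdB
      rw [if_pos (by omega)]
    rw [hB1, hB2]; ring
  · have hy1 : y = 1 := by omega
    subst hy1
    have hB1 : bdB p 0 1 = 0 := by
      unfold bdB; rw [if_neg (by omega), if_neg (by omega)]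
    rw [hB2]
    show matPow (bdB p) n x 0 * bdB p 0 1 + _ = _
    rw [hB1, matPow_col_zero p n x hx]
    ring

lemma key_formula {p : ℝ} (hp0 : 0 < p) (hp1 : p < 1) (x : ℕ) (hx : 1 ≤ x) :
    ∀ (n y : ℕ), matPow (bdB p) n x y
      = Real.sqrt ((1-p)/p) ^ x / Real.sqrt ((1-p)/p) ^ y *
        ((2*Real.sqrt (p*(1-p)))^n * ((2/π) * J n x y)) := by
  set R := Real.sqrt ((1-p)/p) with hRdef
  set s := Real.sqrt (p*(1-p)) with hsdef
  have hq : 0 < 1 - p := by linarith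
  have hRpos : 0 < R := Real.sqrt_pos.mpr (by positivity)
  have hRne : R ≠ 0 := ne_of_gt hRpos
  have hspos : 0 < s := Real.sqrt_pos.mpr (by positivity)
  have hpr : p * R = s := by
    have h1 : (0:ℝ) ≤ p * R := by positivity
    have h2 : (p*R)^2 = p*(1-p) := by
      rw [hRdef, mul_pow, Real.sq_sqrt (by positivity : (0:ℝ) ≤ (1-p)/p)]
      field_simp
    rw [hsdef, ← h2, Real.sqrt_sq h1]
  have hqr : s * R = 1 - p := by
    have h1 : (0:ℝ) ≤ s * R := by positivity
    have h2 : (s*R)^2 = (1-p)^2 := by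
      rw [hsdef, hRdef, mul_pow, Real.sq_sqrt (by positivity : (0:ℝ) ≤ p*(1-p)),
        Real.sq_sqrt (by positivity : (0:ℝ) ≤ (1-p)/p)]
      field_simp
    rw [← Real.sqrt_sq h1, h2, Real.sqrt_sq hq.le]
  have hπ : (π:ℝ) ≠ 0 := Real.pi_ne_zero
  intro n
  induction n with
  | zero =>
    intro y
    rcases Nat.eq_zero_or_pos y with hy0 | hy1
    · subst hy0
      rw [J_y0]
      simp only [matPow]
      rw [if_neg (by omega)]
      ring
    · simp only [matPow]
      rw [J_zero x y hx hy1]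
      by_cases h : x = y
      · subst h
        rw [if_pos rfl, if_pos rfl, div_self (pow_ne_zero _ hRne), pow_zero]
        field_simp
      · rw [if_neg h, if_neg h]
        ring
  | succ n ih =>
    intro y
    rcases Nat.eq_zero_or_pos y with hy0 | hy1
    · subst hy0
      rw [J_y0, matPow_col_zero p _ x hx]
      ring
    · obtain ⟨y', rfl⟩ : ∃ y', y = y' + 1 := ⟨y - 1, by omega⟩
      rw [matPow_succ p n x (y'+1) hx (by omega)]
      have hrec := J_rec n x (y'+1) (by omega)
      simp only [Nat.add_sub_cancel] at hrec ⊢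
      rw [ih y', ih (y'+1+1)]
      rw [← hqr, ← hpr]
      field_simp
      ring_nf at hrec ⊢
      linear_combination (p * p^n * 2^n * R^n * R^3 * R^(y'*2)) * hrec

lemma abs_sin_nat_mul_le (x : ℕ) {θ : ℝ} (h1 : 0 ≤ θ) (h2 : θ ≤ π) :
    |Real.sin (x*θ)| ≤ x * Real.sin θ := by
  have hs : 0 ≤ Real.sin θ := Real.sin_nonneg_of_nonneg_of_le_pi h1 h2
  induction x with
  | zero => simp
  | succ k ih =>
    push_cast
    rw [add_mul, one_mul, Real.sin_add]
    calc |Real.sin (k*θ) * Real.cos θ + Real.cos (k*θ) * Real.sin θ|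
        ≤ |Real.sin (k*θ) * Real.cos θ| + |Real.cos (k*θ) * Real.sin θ| := abs_add_le _ _
      _ = |Real.sin (k*θ)| * |Real.cos θ| + |Real.cos (k*θ)| * |Real.sin θ| := by
          rw [abs_mul, abs_mul]
      _ ≤ (k * Real.sin θ) * 1 + 1 * Real.sin θ := by
          apply add_le_add
          · exact mul_le_mul ih (Real.abs_cos_le_one θ) (abs_nonneg _) (by positivity)
          · rw [abs_of_nonneg hs]
            exact mul_le_mul_of_nonneg_right (Real.abs_cos_le_one _) hs
      _ = (k+1) * Real.sin θ := by ring

lemma pt_bound (N x y : ℕ) {θ : ℝ} (h1 : 0 ≤ θ) (h2 : θ ≤ π) :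
    |(∑ n ∈ Finset.range N, Real.cos θ ^ n) * (Real.sin (x*θ) * Real.sin (y*θ))|
      ≤ 2*x*y := by
  set t := |Real.cos θ| with htdef
  have ht0 : 0 ≤ t := abs_nonneg _
  have ht1 : t ≤ 1 := Real.abs_cos_le_one θ
  have hs : 0 ≤ Real.sin θ := Real.sin_nonneg_of_nonneg_of_le_pi h1 h2
  have hsum0 : (0:ℝ) ≤ ∑ n ∈ Finset.range N, t^n :=
    Finset.sum_nonneg fun n _ => pow_nonneg ht0 n
  have habs : |∑ n ∈ Finset.range N, Real.cos θ ^ n| ≤ ∑ n ∈ Finset.range N, t^n := by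
    calc |∑ n ∈ Finset.range N, Real.cos θ ^ n|
        ≤ ∑ n ∈ Finset.range N, |Real.cos θ ^ n| := Finset.abs_sum_le_sum_abs _ _
      _ = ∑ n ∈ Finset.range N, t^n := by
          apply Finset.sum_congr rfl
          intro n _
          rw [abs_pow]
  have hg : (∑ n ∈ Finset.range N, t^n) * (1 - t^2) ≤ 2 := by
    have hgeom := geom_sum_mul t N
    have htN : 0 ≤ t^N := pow_nonneg ht0 N
    have e : (∑ n ∈ Finset.range N, t^n) * (1 - t^2) = (1 - t^N)*(1+t) := by
      linear_combination (-(1+t)) * hgeom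
    rw [e]
    nlinarith [htN, ht0, ht1]
  have hsin2 : Real.sin θ * Real.sin θ = 1 - t^2 := by
    have h := Real.sin_sq_add_cos_sq θ
    rw [htdef, sq_abs]
    nlinarith [h]
  calc |(∑ n ∈ Finset.range N, Real.cos θ ^ n) * (Real.sin (x*θ) * Real.sin (y*θ))|
      = |∑ n ∈ Finset.range N, Real.cos θ ^ n| * (|Real.sin (x*θ)| * |Real.sin (y*θ)|) := by
        rw [abs_mul, abs_mul]
    _ ≤ (∑ n ∈ Finset.range N, t^n) * ((x*Real.sin θ) * (y*Real.sin θ)) := by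
        apply mul_le_mul habs ?_ (by positivity) hsum0
        exact mul_le_mul (abs_sin_nat_mul_le x h1 h2) (abs_sin_nat_mul_le y h1 h2)
          (abs_nonneg _) (by positivity)
    _ = (x*y) * ((∑ n ∈ Finset.range N, t^n) * (Real.sin θ * Real.sin θ)) := by ring
    _ = (x*y) * ((∑ n ∈ Finset.range N, t^n) * (1 - t^2)) := by rw [hsin2]
    _ ≤ (x*y) * 2 := mul_le_mul_of_nonneg_left hg (by positivity)
    _ = 2*x*y := by ring

end BDAux

theorem stmt2 (p : ℝ) (hp0 : 0 < p) (hp1 : p < 1) (lam : ℝ)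
    (hlam : 2 * Real.sqrt (p * (1 - p)) ≤ lam) (x y : ℕ) (hx : 1 ≤ x) (hy : 1 ≤ y) :
    Summable (fun n : ℕ => lam⁻¹ ^ n * matPow (bdB p) n x y) := by
  have hq : 0 < 1 - p := by linarith
  have hspos : 0 < Real.sqrt (p*(1-p)) := Real.sqrt_pos.mpr (by positivity)
  set μ := 2 * Real.sqrt (p*(1-p)) with hμdef
  have hμ : 0 < μ := by positivity
  have hμne : μ ≠ 0 := ne_of_gt hμ
  have hlam0 : 0 < lam := lt_of_lt_of_le (by rw [hμdef] at hμ; exact hμ) hlam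
  set R := Real.sqrt ((1-p)/p) with hRdef
  have hRpos : 0 < R := Real.sqrt_pos.mpr (by positivity)
  have hRne : R ≠ 0 := ne_of_gt hRpos
  have hπ : (0:ℝ) < π := Real.pi_pos
  have hb : Summable (fun n : ℕ => μ⁻¹ ^ n * matPow (bdB p) n x y) := by
    apply summable_of_sum_range_le (c := R^x/R^y * ((2/π) * (2*x*y*π)))
    · intro n
      exact mul_nonneg (pow_nonneg (inv_nonneg.mpr hμ.le) n)
        (BDAux.matPow_nonneg hp0.le hp1.le n x y)
    · intro N
      have hterm : ∀ n, μ⁻¹ ^ n * matPow (bdB p) n x y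
          = R^x/R^y * ((2/π) * BDAux.J n x y) := by
        intro n
        rw [BDAux.key_formula hp0 hp1 x hx n y, ← hμdef, ← hRdef]
        field_simp
        rw [← mul_pow, div_mul_cancel₀ 1 hμne, one_pow, one_mul]
      rw [Finset.sum_congr rfl (fun n _ => hterm n), ← Finset.mul_sum, ← Finset.mul_sum]
      have hJsum : ∑ n ∈ Finset.range N, BDAux.J n x y
          = ∫ θ in (0:ℝ)..π,
              (∑ n ∈ Finset.range N, Real.cos θ ^ n) * (Real.sin (x*θ) * Real.sin (y*θ)) := by
        unfold BDAux.J
        rw [← intervalIntegral.integral_finset_sum (fun i _ => BDAux.contJ i x y)]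
        apply intervalIntegral.integral_congr
        intro θ _
        simp [Finset.sum_mul]
      have hIb : |∫ θ in (0:ℝ)..π,
            (∑ n ∈ Finset.range N, Real.cos θ ^ n) * (Real.sin (x*θ) * Real.sin (y*θ))|
          ≤ 2*x*y * |π - 0| := by
        rw [← Real.norm_eq_abs]
        apply intervalIntegral.norm_integral_le_of_norm_le_const
        intro θ hθ
        rw [Set.uIoc_of_le hπ.le] at hθ
        rw [Real.norm_eq_abs]
        exact BDAux.pt_bound N x y hθ.1.le hθ.2
      have h5 : ∑ n ∈ Finset.range N, BDAux.J n x y ≤ 2*x*y*π := by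
        rw [hJsum]
        refine le_trans (le_abs_self _) (le_trans hIb ?_)
        rw [sub_zero, abs_of_nonneg hπ.le]
      gcongr
  apply Summable.of_nonneg_of_le _ _ hb
  · intro n
    exact mul_nonneg (pow_nonneg (inv_nonneg.mpr hlam0.le) n)
      (BDAux.matPow_nonneg hp0.le hp1.le n x y)
  · intro n
    apply mul_le_mul_of_nonneg_right _ (BDAux.matPow_nonneg hp0.le hp1.le n x y)
    apply pow_le_pow_left₀ (inv_nonneg.mpr hlam0.le)
    exact inv_anti₀ hμ hlam
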